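/- Let u = (u₁; u₂) and v = (v₁; v₂) be vectors in ℝ^n × ℝ^m (stacked into ℝ^{n+m}) with ‖u₁‖ = ‖v₁‖ = 1. Then sin∠(u₁, v₁) ≤ min{‖u‖, ‖v‖}·sin∠(u, v). -/

import Mathlib

open Matrix

noncomputable section

/-- Euclidean 2-norm of a finitely indexed real vector. -/
def enorm' {ι : Type*} [Fintype ι] (v : ι → ℝ) : ℝ := ‖(WithLp.equiv 2 (ι → ℝ)).symm v‖

/-- Sine of the acute angle between two vectors:
`sin∠(p,q) = √(1 − ⟨p,q⟩²/(‖p‖² ‖q‖²))`. -/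
def sinAngle {ι : Type*} [Fintype ι] (p q : ι → ℝ) : ℝ :=
  Real.sqrt (1 - (p ⬝ᵥ q) ^ 2 / (enorm' p ^ 2 * enorm' q ^ 2))

lemma inner_eq_dot {ι : Type*} [Fintype ι] (p q : ι → ℝ) :
    (inner ℝ ((WithLp.equiv 2 (ι → ℝ)).symm p) ((WithLp.equiv 2 (ι → ℝ)).symm q) : ℝ) = p ⬝ᵥ q := by
  simp [PiLp.inner_apply, dotProduct, RCLike.inner_apply, mul_comm]

lemma enorm_sq {ι : Type*} [Fintype ι] (p : ι → ℝ) : enorm' p ^ 2 = p ⬝ᵥ p := by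
  rw [enorm', ← inner_eq_dot]
  exact (real_inner_self_eq_norm_sq _).symm

lemma enorm_nonneg' {ι : Type*} [Fintype ι] (p : ι → ℝ) : 0 ≤ enorm' p := norm_nonneg _

lemma dot_cs {ι : Type*} [Fintype ι] (p q : ι → ℝ) :
    (p ⬝ᵥ q) ^ 2 ≤ (p ⬝ᵥ p) * (q ⬝ᵥ q) := by
  rw [← inner_eq_dot p q, ← inner_eq_dot p p, ← inner_eq_dot q q, sq]
  exact real_inner_mul_inner_self_le _ _

lemma dot_elim {n m : ℕ} (p₁ q₁ : Fin n → ℝ) (p₂ q₂ : Fin m → ℝ) :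
    Sum.elim p₁ p₂ ⬝ᵥ Sum.elim q₁ q₂ = p₁ ⬝ᵥ q₁ + p₂ ⬝ᵥ q₂ := by
  simp [dotProduct, Fintype.sum_sum_type]

lemma aux_key (a b s t : ℝ) (hs : 0 ≤ s) (ht : 0 ≤ t) (ha : a ^ 2 ≤ 1) (hb : b ^ 2 ≤ s * t) :
    (a + b) ^ 2 ≤ (1 + t) * (s + a ^ 2) := by
  rcases eq_or_lt_of_le ht with h0 | h0
  · have hb0 : b = 0 := by nlinarith [sq_nonneg b]
    rw [hb0, ← h0]; nlinarith
  · nlinarith [sq_nonneg (a * t - b), mul_le_mul_of_nonneg_left hb ht, hb, h0]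

/-- For stacked vectors `u = (u₁; u₂)` and `v = (v₁; v₂)` with `‖u₁‖ = ‖v₁‖ = 1`,
`sin∠(u₁, v₁) ≤ min{‖u‖, ‖v‖} sin∠(u, v)`. -/
theorem stmt_15 {n m : ℕ} (u₁ v₁ : Fin n → ℝ) (u₂ v₂ : Fin m → ℝ)
    (hu₁ : enorm' u₁ = 1) (hv₁ : enorm' v₁ = 1) :
    sinAngle u₁ v₁ ≤
      min (enorm' (Sum.elim u₁ u₂)) (enorm' (Sum.elim v₁ v₂)) *
        sinAngle (Sum.elim u₁ u₂) (Sum.elim v₁ v₂) := by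
  set a := u₁ ⬝ᵥ v₁ with ha_def
  set b := u₂ ⬝ᵥ v₂ with hb_def
  set s := u₂ ⬝ᵥ u₂ with hs_def
  set t := v₂ ⬝ᵥ v₂ with ht_def
  set U := enorm' (Sum.elim u₁ u₂) with hU_def
  set V := enorm' (Sum.elim v₁ v₂) with hV_def
  have hu11 : u₁ ⬝ᵥ u₁ = 1 := by rw [← enorm_sq, hu₁]; norm_num
  have hv11 : v₁ ⬝ᵥ v₁ = 1 := by rw [← enorm_sq, hv₁]; norm_num
  have hs : 0 ≤ s := by rw [hs_def, ← enorm_sq]; positivity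
  have ht : 0 ≤ t := by rw [ht_def, ← enorm_sq]; positivity
  have ha : a ^ 2 ≤ 1 := by
    have := dot_cs u₁ v₁; rwa [hu11, hv11, mul_one] at this
  have hb : b ^ 2 ≤ s * t := dot_cs u₂ v₂
  have hU2 : U ^ 2 = 1 + s := by
    rw [hU_def, enorm_sq, dot_elim, hu11]
  have hV2 : V ^ 2 = 1 + t := by
    rw [hV_def, enorm_sq, dot_elim, hv11]
  have hU0 : 0 ≤ U := enorm_nonneg' _
  have hV0 : 0 ≤ V := enorm_nonneg' _
  have hUV : Sum.elim u₁ u₂ ⬝ᵥ Sum.elim v₁ v₂ = a + b := dot_elim _ _ _ _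
  have hden : (0:ℝ) < U ^ 2 * V ^ 2 := by rw [hU2, hV2]; nlinarith
  have hL : sinAngle u₁ v₁ = Real.sqrt (1 - a ^ 2) := by
    rw [sinAngle, hu₁, hv₁]; norm_num; rfl
  have hR : sinAngle (Sum.elim u₁ u₂) (Sum.elim v₁ v₂) =
      Real.sqrt (1 - (a + b) ^ 2 / (U ^ 2 * V ^ 2)) := by
    rw [sinAngle, hUV]
  rw [hL, hR]
  have hmin0 : 0 ≤ min U V := le_min hU0 hV0
  have hrw : min U V * Real.sqrt (1 - (a + b) ^ 2 / (U ^ 2 * V ^ 2)) =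
      Real.sqrt ((min U V) ^ 2 * (1 - (a + b) ^ 2 / (U ^ 2 * V ^ 2))) := by
    rw [Real.sqrt_mul (sq_nonneg _), Real.sqrt_sq hmin0]
  rw [hrw]
  apply Real.sqrt_le_sqrt
  have hfrac : ∀ M : ℝ, M ^ 2 * (1 - (a + b) ^ 2 / (U ^ 2 * V ^ 2)) =
      (M ^ 2 * (U ^ 2 * V ^ 2) - M ^ 2 * (a + b) ^ 2) / (U ^ 2 * V ^ 2) := by
    intro M; rw [mul_sub, mul_one, sub_div, mul_div_cancel_right₀ _ hden.ne', mul_div_assoc]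
  rcases le_total U V with h | h
  · rw [min_eq_left h, hfrac, le_div_iff₀ hden]
    have key : (a + b) ^ 2 ≤ (1 + t) * (s + a ^ 2) := aux_key a b s t hs ht ha hb
    rw [hU2, hV2]
    nlinarith [key, hs, ht, mul_nonneg hs ht]
  · rw [min_eq_right h, hfrac, le_div_iff₀ hden]
    have key : (a + b) ^ 2 ≤ (1 + s) * (t + a ^ 2) := by
      have hb' : b ^ 2 ≤ t * s := by rwa [mul_comm] at hb
      exact aux_key a b t s ht hs ha hb'
    rw [hU2, hV2]
    nlinarith [key, hs, ht, mul_nonneg hs ht]
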